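/- arXiv:1312.7407 — 11 statements merged into one kernel-verified Lean document; each statement's English description precedes it below -/
import Mathlib

section
/- The composition of two quasihomomorphisms is a quasihomomorphism; more precisely, if f1 : G → H and f2 : H → K are maps of groups whose defect sets D(f1) = {f1(y)⁻¹f1(x)⁻¹f1(xy) : x,y ∈ G} and D(f2) are finite, then the defect set of f2 ∘ f1 is contained in the finite set D(f2) · f2(D(f1)) · D(f2). -/
open scoped Pointwise

/-- The defect set of a map between groups. -/
def defect {G H : Type*} [Group G] [Group H] (f : G → H) : Set H :=
  {h | ∃ x y : G, h = (f y)⁻¹ * (f x)⁻¹ * f (x * y)}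

/-- The composition of two quasihomomorphisms is a quasihomomorphism; the defect set of
`f2 ∘ f1` is contained in the finite set `D(f2) · f2(D(f1)) · D(f2)`. -/
theorem defect_comp_subset {G H K : Type*} [Group G] [Group H] [Group K]
    (f1 : G → H) (f2 : H → K)
    (h1 : (defect f1).Finite) (h2 : (defect f2).Finite) :
    defect (f2 ∘ f1) ⊆ defect f2 * (f2 '' defect f1) * defect f2 ∧
      (defect (f2 ∘ f1)).Finite := by
  have hsub : defect (f2 ∘ f1) ⊆ defect f2 * (f2 '' defect f1) * defect f2 := by
    rintro k ⟨x, y, rfl⟩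
    set δ := (f1 y)⁻¹ * (f1 x)⁻¹ * f1 (x * y) with hδdef
    have hδ : δ ∈ defect f1 := ⟨x, y, rfl⟩
    have hxy : f1 (x * y) = f1 x * f1 y * δ := by rw [hδdef]; group
    have d1 : (f2 δ)⁻¹ * (f2 (f1 x * f1 y))⁻¹ * f2 (f1 x * f1 y * δ) ∈ defect f2 :=
      ⟨f1 x * f1 y, δ, rfl⟩
    have d2 : (f2 (f1 y))⁻¹ * (f2 (f1 x))⁻¹ * f2 (f1 x * f1 y) ∈ defect f2 :=
      ⟨f1 x, f1 y, rfl⟩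
    have key : ((f2 ∘ f1) y)⁻¹ * ((f2 ∘ f1) x)⁻¹ * (f2 ∘ f1) (x * y) =
        ((f2 (f1 y))⁻¹ * (f2 (f1 x))⁻¹ * f2 (f1 x * f1 y)) * f2 δ *
          ((f2 δ)⁻¹ * (f2 (f1 x * f1 y))⁻¹ * f2 (f1 x * f1 y * δ)) := by
      simp only [Function.comp_apply, hxy]
      group
    rw [key]
    exact Set.mul_mem_mul (Set.mul_mem_mul d2 (Set.mem_image_of_mem f2 hδ)) d1
  exact ⟨hsub, Set.Finite.subset ((h2.mul (h1.image f2)).mul h2) hsub⟩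
end

section
/- Let f : G → H be a quasihomomorphism with defect set D = D(f). Then for all x, y ∈ G and all h ∈ f(G), there exists t ∈ D²·D⁻¹ such that f(xy) h = f(x) f(y) h t. Consequently, for every s ∈ D and every h ∈ f(G), h⁻¹ s h ∈ D²·D⁻¹. -/
open scoped Pointwise

/-- For a quasihomomorphism `f : G → H` with defect set `D`: for all `x, y ∈ G` and
`h ∈ f(G)` there is `t ∈ D²·D⁻¹` with `f(xy)·h = f(x)·f(y)·h·t`; consequently for every
`s ∈ D` and `h ∈ f(G)`, `h⁻¹ s h ∈ D²·D⁻¹`. -/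
theorem quasiaction_bounded_displacement {G H : Type*} [Group G] [Group H]
    (f : G → H) (hf : (defect f).Finite) :
    (∀ x y : G, ∀ h ∈ Set.range f,
        ∃ t ∈ defect f * defect f * (defect f)⁻¹, f (x * y) * h = f x * f y * h * t) ∧
    (∀ s ∈ defect f, ∀ h ∈ Set.range f,
        h⁻¹ * s * h ∈ defect f * defect f * (defect f)⁻¹) := by
  have main : ∀ x y : G, ∀ h ∈ Set.range f,
      ∃ t ∈ defect f * defect f * (defect f)⁻¹, f (x * y) * h = f x * f y * h * t := by
    rintro x y h ⟨z, rfl⟩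
    set d1 : H := (f z)⁻¹ * (f (x * y))⁻¹ * f (x * y * z) with hd1
    set d2 : H := (f z)⁻¹ * (f y)⁻¹ * f (y * z) with hd2
    set d3 : H := (f (y * z))⁻¹ * (f x)⁻¹ * f (x * (y * z)) with hd3
    refine ⟨d2 * d3 * d1⁻¹, ?_, ?_⟩
    · exact Set.mul_mem_mul (Set.mul_mem_mul ⟨y, z, rfl⟩ ⟨x, y * z, rfl⟩)
        (Set.inv_mem_inv.mpr ⟨x * y, z, rfl⟩)
    · have : x * (y * z) = x * y * z := by group
      rw [hd1, hd2, hd3, this]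
      group
  refine ⟨main, ?_⟩
  rintro s ⟨x, y, rfl⟩ h hh
  obtain ⟨t, ht, heq⟩ := main x y h hh
  have : h⁻¹ * ((f y)⁻¹ * (f x)⁻¹ * f (x * y)) * h = t := by
    have h1 : (f x * f y * h)⁻¹ * (f (x * y) * h) = t := by rw [heq]; group
    rw [← h1]; group
  rw [this]; exact ht
end

section
/- Let f : G → H be a quasihomomorphism and let Δ_f be the subgroup of H generated by the defect set D(f) (the defect subgroup). Then every element h of f(G) normalizes Δ_f, i.e., f(G) is contained in the normalizer N_H(Δ_f). Consequently, the composition of f with the quotient map N_H(Δ_f) → N_H(Δ_f)/Δ_f is a homomorphism G → N_H(Δ_f)/Δ_f. -/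
/-- Every element of `f(G)` normalizes the defect subgroup `Δ_f = ⟨D(f)⟩`, and the
composition of `f` with the quotient map `N_H(Δ_f) → N_H(Δ_f)/Δ_f` is a homomorphism,
i.e. `(f x · f y)⁻¹ · f (x y) ∈ Δ_f` for all `x, y`. -/
theorem range_subset_normalizer {G H : Type*} [Group G] [Group H]
    (f : G → H) (hf : (defect f).Finite) :
    (∀ x : G, f x ∈ Subgroup.normalizer (Subgroup.closure (defect f) : Set H)) ∧
    (∀ x y : G, (f x * f y)⁻¹ * f (x * y) ∈ Subgroup.closure (defect f)) := by
  set Δ := Subgroup.closure (defect f) with hΔ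
  have hd : ∀ x y : G, (f y)⁻¹ * (f x)⁻¹ * f (x * y) ∈ Δ := fun x y =>
    Subgroup.subset_closure ⟨x, y, rfl⟩
  -- conjugation by `(f a)⁻¹` preserves Δ
  have hconj : ∀ a : G, ∀ g ∈ Δ, (f a)⁻¹ * g * f a ∈ Δ := by
    intro a g hg
    induction hg using Subgroup.closure_induction with
    | mem d hd' =>
        obtain ⟨x, y, rfl⟩ := hd'
        have key : (f a)⁻¹ * ((f y)⁻¹ * (f x)⁻¹ * f (x * y)) * f a =
            ((f a)⁻¹ * (f y)⁻¹ * f (y * a)) *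
            ((f (y * a))⁻¹ * (f x)⁻¹ * f (x * (y * a))) *
            ((f a)⁻¹ * (f (x * y))⁻¹ * f (x * y * a))⁻¹ := by
          rw [mul_assoc x y a]; group
        rw [key]
        exact mul_mem (mul_mem (hd y a) (hd x (y * a))) (inv_mem (hd (x * y) a))
    | one => simpa using Subgroup.one_mem Δ
    | mul u v hu hv ihu ihv =>
        have : (f a)⁻¹ * (u * v) * f a =
            ((f a)⁻¹ * u * f a) * ((f a)⁻¹ * v * f a) := by group
        rw [this]; exact mul_mem ihu ihv
    | inv u hu ihu =>
        have : (f a)⁻¹ * u⁻¹ * f a = ((f a)⁻¹ * u * f a)⁻¹ := by group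
        rw [this]; exact inv_mem ihu
  -- `f 1 ∈ Δ`
  have hfe : f (1 : G) ∈ Δ := by
    have := hd 1 1
    simp only [mul_one] at this
    have h1 : (f (1 : G))⁻¹ ∈ Δ := by
      have h2 : (f (1:G))⁻¹ * (f (1:G))⁻¹ * f (1:G) = (f (1:G))⁻¹ := by group
      rwa [h2] at this
    simpa using inv_mem h1
  -- conjugation by `f a` preserves Δ
  have hconj' : ∀ a : G, ∀ g ∈ Δ, f a * g * (f a)⁻¹ ∈ Δ := by
    intro a g hg
    set c : H := f (1 : G) * ((f a)⁻¹ * (f a⁻¹)⁻¹ * f (a⁻¹ * a))⁻¹ with hc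
    have hcΔ : c ∈ Δ := mul_mem hfe (inv_mem (hd a⁻¹ a))
    have hfa : f a = (f a⁻¹)⁻¹ * c := by
      rw [hc, inv_mul_cancel]; group
    have : f a * g * (f a)⁻¹ = (f a⁻¹)⁻¹ * (c * g * c⁻¹) * f a⁻¹ := by
      rw [hfa]; group
    rw [this]
    exact hconj a⁻¹ _ (mul_mem (mul_mem hcΔ hg) (inv_mem hcΔ))
  constructor
  · intro x
    rw [Subgroup.mem_normalizer_iff]
    intro h
    constructor
    · exact fun hh => hconj' x h hh
    · intro hh
      have : h = (f x)⁻¹ * (f x * h * (f x)⁻¹) * f x := by group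
      rw [this]; exact hconj x _ hh
  · intro x y
    have : (f x * f y)⁻¹ * f (x * y) = (f y)⁻¹ * (f x)⁻¹ * f (x * y) := by group
    rw [this]; exact hd x y
end

section
/- Let f : G → H be a quasihomomorphism with defect subgroup Δ_f. The map sending g ∈ G to the outer automorphism class of conjugation by f(g)⁻¹ on Δ_f is well-defined, and the associated map φ : G → Out(Δ_f) given by φ(g) = [ad(f(g))] is a homomorphism with finite image. In particular, the kernel of φ is a finite-index subgroup of G. -/
/-- The subgroup of inner automorphisms is normal in the automorphism group. -/
instance innRange_normal (K : Type*) [Group K] :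
    ((MulAut.conj : K →* MulAut K).range).Normal := by
  constructor
  rintro x ⟨k, rfl⟩ g
  refine ⟨g k, ?_⟩
  ext y
  simp [MulAut.conj_apply, mul_assoc, map_mul, map_inv]

namespace QHaux

open Subgroup Pointwise

variable {G H : Type*} [Group G] [Group H] (f : G → H)

theorem mem_defect (x y : G) : (f y)⁻¹ * (f x)⁻¹ * f (x * y) ∈ defect f := ⟨x, y, rfl⟩

theorem f_one_inv_mem : (f 1)⁻¹ ∈ defect f :=
  ⟨1, 1, by rw [one_mul]; group⟩

/-- Conjugation of a defect element by `f z`⁻¹ expressed as a product of defect elements. -/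
theorem keyA (x y z : G) :
    (f z)⁻¹ * ((f y)⁻¹ * (f x)⁻¹ * f (x * y)) * f z =
      ((f z)⁻¹ * (f y)⁻¹ * f (y * z)) * ((f (y * z))⁻¹ * (f x)⁻¹ * f (x * (y * z))) *
        ((f z)⁻¹ * (f (x * y))⁻¹ * f (x * y * z))⁻¹ := by
  rw [← mul_assoc x y z]
  group

/-- Conjugation of a defect element by `f z` expressed as a product of defect elements
and their inverses. -/
theorem keyC (x y z : G) :
    f z * ((f y)⁻¹ * (f x)⁻¹ * f (x * y)) * (f z)⁻¹ =
      ((f 1)⁻¹)⁻¹ * ((f z⁻¹)⁻¹ * (f z)⁻¹ * f (z * z⁻¹))⁻¹ *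
        ((f z⁻¹)⁻¹ * (f y)⁻¹ * f (y * z⁻¹)) *
        ((f (y * z⁻¹))⁻¹ * (f x)⁻¹ * f (x * (y * z⁻¹))) *
        ((f z⁻¹)⁻¹ * (f (x * y))⁻¹ * f (x * y * z⁻¹))⁻¹ *
        ((f z⁻¹)⁻¹ * (f z)⁻¹ * f (z * z⁻¹)) * (f 1)⁻¹ := by
  rw [mul_inv_cancel, ← mul_assoc x y z⁻¹]
  group

theorem conj_inv_defect_mem (z : G) {d : H} (hd : d ∈ defect f) :
    (f z)⁻¹ * d * f z ∈ Subgroup.closure (defect f) := by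
  obtain ⟨x, y, rfl⟩ := hd
  rw [keyA]
  exact mul_mem (mul_mem (subset_closure (mem_defect f y z))
    (subset_closure (mem_defect f x (y * z)))) (inv_mem (subset_closure (mem_defect f (x * y) z)))

theorem conj_defect_mem (z : G) {d : H} (hd : d ∈ defect f) :
    f z * d * (f z)⁻¹ ∈ Subgroup.closure (defect f) := by
  obtain ⟨x, y, rfl⟩ := hd
  rw [keyC]
  refine mul_mem (mul_mem (mul_mem (mul_mem (mul_mem (mul_mem ?_ ?_) ?_) ?_) ?_) ?_) ?_
  · exact inv_mem (subset_closure (f_one_inv_mem f))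
  · exact inv_mem (subset_closure (mem_defect f z z⁻¹))
  · exact subset_closure (mem_defect f y z⁻¹)
  · exact subset_closure (mem_defect f x (y * z⁻¹))
  · exact inv_mem (subset_closure (mem_defect f (x * y) z⁻¹))
  · exact subset_closure (mem_defect f z z⁻¹)
  · exact subset_closure (f_one_inv_mem f)

theorem conj_defect_mem_T (z : G) {d : H} (hd : d ∈ defect f) :
    f z * d * (f z)⁻¹ ∈
      (defect f)⁻¹ * (defect f)⁻¹ * defect f * defect f * (defect f)⁻¹ * defect f * defect f := by
  obtain ⟨x, y, rfl⟩ := hd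
  rw [keyC]
  exact Set.mul_mem_mul (Set.mul_mem_mul (Set.mul_mem_mul (Set.mul_mem_mul (Set.mul_mem_mul
    (Set.mul_mem_mul (Set.inv_mem_inv.2 (f_one_inv_mem f))
      (Set.inv_mem_inv.2 (mem_defect f z z⁻¹)))
    (mem_defect f y z⁻¹)) (mem_defect f x (y * z⁻¹)))
    (Set.inv_mem_inv.2 (mem_defect f (x * y) z⁻¹))) (mem_defect f z z⁻¹)) (f_one_inv_mem f)

theorem conj_mem_closure (z : G) {h : H} (hh : h ∈ Subgroup.closure (defect f)) :
    f z * h * (f z)⁻¹ ∈ Subgroup.closure (defect f) := by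
  have hle : Subgroup.closure (defect f) ≤
      Subgroup.comap (MulAut.conj (f z)).toMonoidHom (Subgroup.closure (defect f)) := by
    rw [Subgroup.closure_le]
    intro d hd
    have : (MulAut.conj (f z)).toMonoidHom d ∈ Subgroup.closure (defect f) := by
      simpa [MulAut.conj_apply] using conj_defect_mem f z hd
    exact this
  have := hle hh
  rw [Subgroup.mem_comap] at this
  simpa [MulAut.conj_apply] using this

theorem conj_inv_mem_closure (z : G) {h : H} (hh : h ∈ Subgroup.closure (defect f)) :
    (f z)⁻¹ * h * f z ∈ Subgroup.closure (defect f) := by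
  have hle : Subgroup.closure (defect f) ≤
      Subgroup.comap (MulAut.conj (f z)⁻¹).toMonoidHom (Subgroup.closure (defect f)) := by
    rw [Subgroup.closure_le]
    intro d hd
    have : (MulAut.conj (f z)⁻¹).toMonoidHom d ∈ Subgroup.closure (defect f) := by
      simpa [MulAut.conj_apply] using conj_inv_defect_mem f z hd
    exact this
  have := hle hh
  rw [Subgroup.mem_comap] at this
  simpa [MulAut.conj_apply] using this

/-- Conjugation by `f z` as an automorphism of the defect subgroup. -/
def psi (z : G) : MulAut ↥(Subgroup.closure (defect f)) where
  toFun δ := ⟨f z * δ * (f z)⁻¹, conj_mem_closure f z δ.2⟩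
  invFun δ := ⟨(f z)⁻¹ * δ * f z, conj_inv_mem_closure f z δ.2⟩
  left_inv δ := Subtype.ext (by simp [mul_assoc])
  right_inv δ := Subtype.ext (by simp [mul_assoc])
  map_mul' a b := Subtype.ext (by simp [mul_assoc])

@[simp] theorem psi_apply_coe (z : G) (δ : ↥(Subgroup.closure (defect f))) :
    (psi f z δ : H) = f z * δ * (f z)⁻¹ := rfl

@[simp] theorem psi_symm_apply_coe (z : G) (δ : ↥(Subgroup.closure (defect f))) :
    ((psi f z)⁻¹ δ : H) = (f z)⁻¹ * δ * f z := rfl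

/-- Automorphisms of the defect subgroup are determined by their values on defect elements. -/
theorem aut_ext {a b : MulAut ↥(Subgroup.closure (defect f))}
    (hab : ∀ (d : H) (hd : d ∈ defect f),
      a ⟨d, Subgroup.subset_closure hd⟩ = b ⟨d, Subgroup.subset_closure hd⟩) : a = b := by
  have key : (Subgroup.closure (defect f)).subtype.comp a.toMonoidHom =
      (Subgroup.closure (defect f)).subtype.comp b.toMonoidHom := by
    apply MonoidHom.eq_of_eqOn_dense (Subgroup.closure_preimage_eq_top (defect f))
    rintro ⟨d, hmem⟩ hd
    have : d ∈ defect f := hd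
    exact congrArg ((Subgroup.closure (defect f)).subtype) (hab d this)
  ext δ
  have h2 := DFunLike.congr_fun key δ
  simp only [MonoidHom.comp_apply, Subgroup.coe_subtype, MulEquiv.coe_toMonoidHom] at h2
  exact h2

end QHaux

open Pointwise

/-- For a quasihomomorphism `f : G → H` with defect subgroup `Δ = ⟨D(f)⟩`, the map
`φ : G → Out(Δ)` sending `g` to the class of conjugation by `f(g)` on `Δ` is a
well-defined homomorphism with finite image; in particular its kernel has finite
index in `G`. -/
theorem outer_action_hom_finite_image {G H : Type*} [Group G] [Group H]
    (f : G → H) (hf : (defect f).Finite) :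
    ∃ φ : G →*
        (MulAut ↥(Subgroup.closure (defect f)) ⧸
          (MulAut.conj : ↥(Subgroup.closure (defect f)) →*
              MulAut ↥(Subgroup.closure (defect f))).range),
      (∀ g : G, ∃ ψ : MulAut ↥(Subgroup.closure (defect f)),
          φ g = QuotientGroup.mk ψ ∧
          ∀ δ : ↥(Subgroup.closure (defect f)), (ψ δ : H) = f g * ↑δ * (f g)⁻¹) ∧
      (Set.range φ).Finite ∧ φ.ker.FiniteIndex := by
  classical
  let φ : G →*
      (MulAut ↥(Subgroup.closure (defect f)) ⧸
        (MulAut.conj : ↥(Subgroup.closure (defect f)) →*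
            MulAut ↥(Subgroup.closure (defect f))).range) :=
    { toFun := fun g => QuotientGroup.mk (QHaux.psi f g)
      map_one' := by
        rw [QuotientGroup.eq_one_iff]
        have h1 : f 1 ∈ Subgroup.closure (defect f) :=
          inv_inv (f 1) ▸ inv_mem (Subgroup.subset_closure (QHaux.f_one_inv_mem f))
        refine ⟨⟨f 1, h1⟩, ?_⟩
        apply QHaux.aut_ext
        intro d hd
        exact Subtype.ext (by simp [MulAut.conj_apply])
      map_mul' := by
        intro a b
        rw [← QuotientGroup.mk_mul, QuotientGroup.eq]
        refine ⟨(⟨(f b)⁻¹ * (f a)⁻¹ * f (a * b),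
          Subgroup.subset_closure (QHaux.mem_defect f a b)⟩ :
            ↥(Subgroup.closure (defect f)))⁻¹, ?_⟩
        apply QHaux.aut_ext
        intro d hd
        refine Subtype.ext ?_
        simp only [MulAut.conj_apply, MulAut.mul_apply, QHaux.psi_apply_coe,
          QHaux.psi_symm_apply_coe, Subgroup.coe_mul, InvMemClass.coe_inv, inv_inv]
        group }
  have hDsub : Finite ↥(defect f) := hf.to_subtype
  have hTfin : ((defect f)⁻¹ * (defect f)⁻¹ * defect f * defect f * (defect f)⁻¹ * defect f *
      defect f).Finite :=
    (((((hf.inv.mul hf.inv).mul hf).mul hf).mul hf.inv).mul hf).mul hf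
  have hRinj : Function.Injective
      (fun (a : MulAut ↥(Subgroup.closure (defect f))) (d : ↥(defect f)) =>
        (a ⟨(d : H), Subgroup.subset_closure d.2⟩ : H)) := by
    intro a b hab
    apply QHaux.aut_ext
    intro d hd
    exact Subtype.ext (congrFun hab ⟨d, hd⟩)
  have hrange : (Set.range fun z : G => QHaux.psi f z).Finite := by
    refine Set.Finite.of_finite_image ?_ hRinj.injOn
    refine (Set.Finite.pi fun _ : ↥(defect f) => hTfin).subset ?_
    rintro _ ⟨a, ⟨z, rfl⟩, rfl⟩
    intro d _
    exact QHaux.conj_defect_mem_T f z d.2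
  have hφrange : (Set.range ⇑φ).Finite := by
    have hsub : Set.range ⇑φ ⊆
        QuotientGroup.mk '' (Set.range fun z : G => QHaux.psi f z) := by
      rintro _ ⟨g, rfl⟩
      exact ⟨QHaux.psi f g, ⟨g, rfl⟩, rfl⟩
    exact (hrange.image _).subset hsub
  refine ⟨φ, fun g => ⟨QHaux.psi f g, rfl, fun δ => rfl⟩, hφrange, ?_⟩
  constructor
  rw [Subgroup.index_ker]
  have hfr : Finite ↥φ.range := by
    have := hφrange.to_subtype
    exact Finite.of_equiv _ (Equiv.setCongr (MonoidHom.coe_range φ).symm)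
  exact Nat.card_ne_zero.2 ⟨⟨1, one_mem _⟩, hfr⟩
end

section
/- Consider a short exact sequence 1 → A → B → C → 1 with A central in B, and let s : C → B be a quasihomomorphism with p ∘ s = id (a quasi-splitting), where p : B → C is the projection. Then the map q : B → A defined by q(b) = b⁻¹ · s(p(b)) is a quasihomomorphism, with D(q) ⊆ D(s). -/
/-- Given a central extension `1 → A → B → C → 1` (with `A = ker p` central in `B`) and a
quasi-splitting `s : C → B` (a quasihomomorphism with `p ∘ s = id`), the map
`q(b) = b⁻¹ · s(p(b))` takes values in `A` and is a quasihomomorphism with `D(q) ⊆ D(s)`. -/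
theorem quasisplitting_retraction {B C : Type*} [Group B] [Group C]
    (p : B →* C) (hcentral : p.ker ≤ Subgroup.center B)
    (s : C → B) (hs : (defect s).Finite) (hps : ∀ c : C, p (s c) = c) :
    (∀ b : B, b⁻¹ * s (p b) ∈ p.ker) ∧
    defect (fun b : B => b⁻¹ * s (p b)) ⊆ defect s ∧
    (defect (fun b : B => b⁻¹ * s (p b))).Finite := by
  have hker : ∀ b : B, b⁻¹ * s (p b) ∈ p.ker := by
    intro b
    simp [MonoidHom.mem_ker, hps]
  have hsub : defect (fun b : B => b⁻¹ * s (p b)) ⊆ defect s := by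
    rintro h ⟨x, y, rfl⟩
    refine ⟨p x, p y, ?_⟩
    have hc : ∀ g : B, g * ((s (p x))⁻¹ * x) = ((s (p x))⁻¹ * x) * g := by
      intro g
      have := (Subgroup.center B).inv_mem (hcentral (hker x))
      simpa [mul_inv_rev] using (Subgroup.mem_center_iff.mp this g)
    have hpxy : p (x * y) = p x * p y := map_mul p x y
    calc (y⁻¹ * s (p y))⁻¹ * (x⁻¹ * s (p x))⁻¹ * ((x * y)⁻¹ * s (p (x * y)))
        = (s (p y))⁻¹ * (y * ((s (p x))⁻¹ * x)) * (y⁻¹ * (x⁻¹ * s (p (x * y)))) := by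
          group
      _ = (s (p y))⁻¹ * (((s (p x))⁻¹ * x) * y) * (y⁻¹ * (x⁻¹ * s (p (x * y)))) := by
          rw [hc y]
      _ = (s (p y))⁻¹ * (s (p x))⁻¹ * s (p x * p y) := by
          rw [hpxy]; group
  exact ⟨hker, hsub, hs.subset hsub⟩
end

section
/- Let f : G → H be a quasihomomorphism, Δ_f = ⟨D(f)⟩ its defect subgroup, and suppose f_o : G → H is a map with the properties: f_o(G) ⊆ Z_H(Δ_f) (the centralizer of Δ_f), and there is a finite set R ⊆ Δ_f such that for every x ∈ G, f(x) ∈ f_o(x)·R. Then f_o is a quasihomomorphism and D(f_o) ⊆ Δ_f. -/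
/-- If `f : G → H` is a quasihomomorphism with defect subgroup `Δ_f = ⟨D(f)⟩` and
`f_o : G → H` maps into the centralizer of `Δ_f` while staying at finite distance from `f`
(via a finite set `R ⊆ Δ_f` with `f(x) ∈ f_o(x)·R`), then `f_o` is a quasihomomorphism
with `D(f_o) ⊆ Δ_f`. -/
theorem centralizer_perturbation_quasihom {G H : Type*} [Group G] [Group H]
    (f f_o : G → H) (hf : (defect f).Finite)
    (hcen : ∀ x : G, f_o x ∈ Subgroup.centralizer (Subgroup.closure (defect f) : Set H))
    (R : Set H) (hRfin : R.Finite)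
    (hRsub : R ⊆ (Subgroup.closure (defect f) : Set H))
    (hclose : ∀ x : G, ∃ r ∈ R, f x = f_o x * r) :
    (defect f_o).Finite ∧ defect f_o ⊆ (Subgroup.closure (defect f) : Set H) := by
  have key : ∀ h ∈ defect f_o,
      ∃ a ∈ R, ∃ b ∈ R, ∃ c ∈ defect f, ∃ e ∈ R, h = a * b * c * e⁻¹ := by
    rintro h ⟨x, y, rfl⟩
    obtain ⟨rx, hrx, hx⟩ := hclose x
    obtain ⟨ry, hry, hy⟩ := hclose y
    obtain ⟨rxy, hrxy, hxy⟩ := hclose (x * y)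
    refine ⟨rx, hrx, ry, hry, (f y)⁻¹ * (f x)⁻¹ * f (x * y), ⟨x, y, rfl⟩, rxy, hrxy, ?_⟩
    have comm : Commute rx (f_o y) :=
      Subgroup.mem_centralizer_iff.mp (hcen y) rx (hRsub hrx)
    have comm' : ∀ z : H, rx * ((f_o y)⁻¹ * z) = (f_o y)⁻¹ * (rx * z) := by
      intro z
      rw [← mul_assoc, ← mul_assoc, comm.inv_right.eq]
    rw [hx, hy, hxy]
    simp [mul_inv_rev, mul_assoc, comm']
  constructor
  · apply Set.Finite.subset (((hRfin.prod hRfin).prod (hf.prod hRfin)).image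
      (fun p : (H × H) × (H × H) => p.1.1 * p.1.2 * p.2.1 * p.2.2⁻¹))
    rintro h hh
    obtain ⟨a, ha, b, hb, c, hc, e, he, rfl⟩ := key h hh
    exact ⟨((a, b), (c, e)), ⟨⟨ha, hb⟩, ⟨hc, he⟩⟩, rfl⟩
  · intro h hh
    obtain ⟨a, ha, b, hb, c, hc, e, he, rfl⟩ := key h hh
    exact mul_mem (mul_mem (mul_mem (hRsub ha) (hRsub hb)) (Subgroup.subset_closure hc))
      (inv_mem (hRsub he))
end

section
/- Every quasihomomorphism is constructible: for every quasihomomorphism f : G → H there exist a finite-index subgroup G_o ≤ G and a quasihomomorphism f_o : G_o → H at finite distance from f|G_o (i.e., {f(x)⁻¹f_o(x) : x ∈ G_o} is finite) such that, setting H_o = ⟨f_o(G_o)⟩ and A = ⟨D(f_o)⟩, the subgroup A is a finitely generated abelian subgroup central in H_o, and the composition of f_o with the quotient H_o → H_o/A is a group homomorphism. -/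
namespace QHproof
open Subgroup
variable {G H : Type*} [Group G] [Group H]

theorem mem_defect (f : G → H) (x y : G) :
    (f y)⁻¹ * (f x)⁻¹ * f (x * y) ∈ defect f := ⟨x, y, rfl⟩

theorem conj_defect (f : G → H) (x y z : G) :
    (f x)⁻¹ * ((f z)⁻¹ * (f y)⁻¹ * f (y * z)) * f x
      = ((f x)⁻¹ * (f z)⁻¹ * f (z * x)) * ((f (z * x))⁻¹ * (f y)⁻¹ * f (y * (z * x)))
        * ((f x)⁻¹ * (f (y * z))⁻¹ * f (y * z * x))⁻¹ := by
  rw [show y * (z * x) = y * z * x by group]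
  group

theorem conjSet_finite (f : G → H) (hf : (defect f).Finite) {a : H}
    (ha : a ∈ closure (defect f)) :
    {h : H | ∃ x : G, h = (f x)⁻¹ * a * f x}.Finite := by
  induction ha using closure_induction with
  | mem d hd =>
      apply ((hf.mul hf).mul hf.inv).subset
      rintro h ⟨x, rfl⟩
      obtain ⟨y, z, rfl⟩ := hd
      rw [conj_defect f x y z]
      exact Set.mul_mem_mul (Set.mul_mem_mul (mem_defect f z x) (mem_defect f y (z * x)))
        (Set.inv_mem_inv.mpr (mem_defect f (y * z) x))
  | one =>
      apply (Set.finite_singleton 1).subset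
      rintro h ⟨x, rfl⟩
      simp
  | mul a b _ _ pa pb =>
      apply (pa.mul pb).subset
      rintro h ⟨x, rfl⟩
      rw [show (f x)⁻¹ * (a * b) * f x = ((f x)⁻¹ * a * f x) * ((f x)⁻¹ * b * f x) by group]
      exact Set.mul_mem_mul ⟨x, rfl⟩ ⟨x, rfl⟩
  | inv a _ pa =>
      apply pa.inv.subset
      rintro h ⟨x, rfl⟩
      rw [show (f x)⁻¹ * a⁻¹ * f x = ((f x)⁻¹ * a * f x)⁻¹ by group]
      exact Set.inv_mem_inv.mpr ⟨x, rfl⟩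

theorem conjSet_finite' (f : G → H) (hf : (defect f).Finite) {a : H}
    (ha : a ∈ closure (defect f)) :
    {h : H | ∃ x : G, h = f x * a * (f x)⁻¹}.Finite := by
  have hK : {h : H | ∃ x : G, h = (f x⁻¹)⁻¹ * (f x)⁻¹}.Finite := by
    apply (hf.mul (Set.finite_singleton (f 1)⁻¹)).subset
    rintro h ⟨x, rfl⟩
    rw [show (f x⁻¹)⁻¹ * (f x)⁻¹ = ((f x⁻¹)⁻¹ * (f x)⁻¹ * f (x * x⁻¹)) * (f 1)⁻¹ by
      rw [mul_inv_cancel]; group]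
    exact Set.mul_mem_mul (mem_defect f x x⁻¹) rfl
  apply ((hK.inv.mul (conjSet_finite f hf ha)).mul hK).subset
  rintro h ⟨x, rfl⟩
  rw [show f x * a * (f x)⁻¹
      = ((f x⁻¹)⁻¹ * (f x)⁻¹)⁻¹ * ((f x⁻¹)⁻¹ * a * f x⁻¹) * ((f x⁻¹)⁻¹ * (f x)⁻¹) by group]
  exact Set.mul_mem_mul (Set.mul_mem_mul (Set.inv_mem_inv.mpr ⟨x, rfl⟩) ⟨x⁻¹, rfl⟩) ⟨x, rfl⟩

theorem conj_eq_on_closure (f : G → H) {u v : H}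
    (h : ∀ d ∈ defect f, u * d * u⁻¹ = v * d * v⁻¹) {a : H}
    (ha : a ∈ closure (defect f)) :
    u * a * u⁻¹ = v * a * v⁻¹ := by
  induction ha using closure_induction with
  | mem d hd => exact h d hd
  | one => group
  | mul a b _ _ pa pb =>
      calc u * (a * b) * u⁻¹ = (u * a * u⁻¹) * (u * b * u⁻¹) := by group
      _ = (v * a * v⁻¹) * (v * b * v⁻¹) := by rw [pa, pb]
      _ = v * (a * b) * v⁻¹ := by group
  | inv a _ pa =>
      calc u * a⁻¹ * u⁻¹ = (u * a * u⁻¹)⁻¹ := by group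
      _ = (v * a * v⁻¹)⁻¹ := by rw [pa]
      _ = v * a⁻¹ * v⁻¹ := by group

theorem cent_of_conj_eq (f : G → H) {u v : H}
    (h : ∀ d ∈ defect f, u * d * u⁻¹ = v * d * v⁻¹) :
    u⁻¹ * v ∈ centralizer (closure (defect f) : Set H) := by
  rw [mem_centralizer_iff]
  intro a ha
  have e := conj_eq_on_closure f h ha
  calc a * (u⁻¹ * v) = u⁻¹ * (u * a * u⁻¹) * v := by group
  _ = u⁻¹ * (v * a * v⁻¹) * v := by rw [e]
  _ = (u⁻¹ * v) * a := by group


theorem conj_mem_A (f : G → H) (x : G) {a : H} (ha : a ∈ closure (defect f)) :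
    (f x)⁻¹ * a * f x ∈ closure (defect f) := by
  induction ha using closure_induction with
  | mem d hd =>
      obtain ⟨y, z, rfl⟩ := hd
      rw [conj_defect f x y z]
      exact mul_mem (mul_mem (subset_closure (mem_defect f z x))
        (subset_closure (mem_defect f y (z * x))))
        (inv_mem (subset_closure (mem_defect f (y * z) x)))
  | one => rw [mul_one, inv_mul_cancel]; exact one_mem _
  | mul a b _ _ pa pb =>
      rw [show (f x)⁻¹ * (a * b) * f x = ((f x)⁻¹ * a * f x) * ((f x)⁻¹ * b * f x) by group]
      exact mul_mem pa pb
  | inv a _ pa =>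
      rw [show (f x)⁻¹ * a⁻¹ * f x = ((f x)⁻¹ * a * f x)⁻¹ by group]
      exact inv_mem pa

theorem f_one_mem (f : G → H) : f 1 ∈ closure (defect f) := by
  have h : f 1 = ((f 1)⁻¹ * (f 1)⁻¹ * f (1 * 1))⁻¹ := by rw [one_mul]; group
  rw [h]; exact inv_mem (subset_closure (mem_defect f 1 1))

theorem k_mem (f : G → H) (x : G) : (f x⁻¹)⁻¹ * (f x)⁻¹ ∈ closure (defect f) := by
  have h : (f x⁻¹)⁻¹ * (f x)⁻¹ = ((f x⁻¹)⁻¹ * (f x)⁻¹ * f (x * x⁻¹)) * (f 1)⁻¹ := by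
    rw [mul_inv_cancel]; group
  rw [h]; exact mul_mem (subset_closure (mem_defect f x x⁻¹)) (inv_mem (f_one_mem f))

/-- The finite-index subgroup. -/
def GoSub (f : G → H) : Subgroup G where
  carrier := {x | ∃ a ∈ closure (defect f),
    f x * a ∈ centralizer (closure (defect f) : Set H)}
  one_mem' := ⟨(f 1)⁻¹, inv_mem (f_one_mem f), by rw [mul_inv_cancel]; exact one_mem _⟩
  mul_mem' := by
    rintro x y ⟨a, haA, hca⟩ ⟨b, hbA, hcb⟩
    refine ⟨((f y)⁻¹ * (f x)⁻¹ * f (x * y))⁻¹ * b * a,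
      mul_mem (mul_mem (inv_mem (subset_closure (mem_defect f x y))) hbA) haA, ?_⟩
    have hcomm : a * (f y * b) = (f y * b) * a := mem_centralizer_iff.mp hcb a haA
    have e : f (x * y) * (((f y)⁻¹ * (f x)⁻¹ * f (x * y))⁻¹ * b * a)
        = f x * ((f y * b) * a) := by group
    rw [e, ← hcomm, show f x * (a * (f y * b)) = (f x * a) * (f y * b) by group]
    exact mul_mem hca hcb
  inv_mem' := by
    rintro x ⟨a, haA, hca⟩
    have hacomm : a * (f x * a) = (f x * a) * a := mem_centralizer_iff.mp hca a haA
    have hcomm : a * f x = f x * a := by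
      have h2 : (a * f x) * a = (f x * a) * a := by rw [mul_assoc]; exact hacomm
      exact mul_right_cancel h2
    refine ⟨((f x⁻¹)⁻¹ * (f x)⁻¹) * a⁻¹, mul_mem (k_mem f x) (inv_mem haA), ?_⟩
    have e : f x⁻¹ * (((f x⁻¹)⁻¹ * (f x)⁻¹) * a⁻¹) = (a * f x)⁻¹ := by group
    rw [e, hcomm]
    exact inv_mem hca

theorem GoSub_finiteIndex (f : G → H) (hf : (defect f).Finite) :
    (GoSub f).FiniteIndex := by
  haveI : Finite ↥(defect f) := hf.to_subtype
  set ψ : G → (↥(defect f) → H) := fun x d => f x * ↑d * (f x)⁻¹ with hψ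
  have hrange : (Set.range ψ).Finite := by
    have hE : (⋃ d ∈ defect f, {h : H | ∃ x : G, h = f x * d * (f x)⁻¹}).Finite :=
      hf.biUnion fun d hd => conjSet_finite' f hf (subset_closure hd)
    apply (Set.Finite.pi fun _ : ↥(defect f) => hE).subset
    rintro v ⟨x, rfl⟩
    refine Set.mem_univ_pi.mpr fun d => ?_
    exact Set.mem_biUnion d.2 ⟨x, rfl⟩
  have hkey : ∀ x y : G, ψ x = ψ y → x⁻¹ * y ∈ GoSub f := by
    intro x y hxy
    have hd : ∀ d ∈ defect f, f x * d * (f x)⁻¹ = f y * d * (f y)⁻¹ := by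
      intro d hd0
      exact congrFun hxy ⟨d, hd0⟩
    have hC : (f x)⁻¹ * f y ∈ centralizer (closure (defect f) : Set H) :=
      cent_of_conj_eq f hd
    refine ⟨(f (x⁻¹ * y))⁻¹ * (f x)⁻¹ * f (x * (x⁻¹ * y)),
      subset_closure ⟨x, x⁻¹ * y, rfl⟩, ?_⟩
    have e : f (x⁻¹ * y) * ((f (x⁻¹ * y))⁻¹ * (f x)⁻¹ * f (x * (x⁻¹ * y)))
        = (f x)⁻¹ * f y := by
      rw [show x * (x⁻¹ * y) = y by group]
      group
    rw [e]; exact hC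
  haveI : Finite ↥(Set.range ψ) := hrange.to_subtype
  haveI : Finite (G ⧸ GoSub f) := by
    apply Finite.of_surjective
      (fun v : ↥(Set.range ψ) => (QuotientGroup.mk v.2.choose : G ⧸ GoSub f))
    intro q
    induction q using QuotientGroup.induction_on with
    | _ x =>
      have hx : ψ x ∈ Set.range ψ := ⟨x, rfl⟩
      exact ⟨⟨ψ x, hx⟩, QuotientGroup.eq.mpr (hkey _ _ hx.choose_spec)⟩
  exact Subgroup.finiteIndex_of_finite_quotient

end QHproof


/-- Every quasihomomorphism is constructible: given a quasihomomorphism `f : G → H`, there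
are a finite-index subgroup `G_o ≤ G` and a quasihomomorphism `f_o : G_o → H` at finite
distance from `f|G_o`, such that with `H_o = ⟨f_o(G_o)⟩` and `A = ⟨D(f_o)⟩`, the subgroup
`A` is a finitely generated abelian subgroup of `H_o` central in `H_o`, and the projection
of `f_o` to `H_o/A` is a homomorphism. -/
theorem quasihom_constructible {G H : Type*} [Group G] [Group H]
    (f : G → H) (hf : (defect f).Finite) :
    ∃ Go : Subgroup G, Go.FiniteIndex ∧
      ∃ fo : Go → H,
        (defect fo).Finite ∧
        (Set.range fun x : Go => (f (x : G))⁻¹ * fo x).Finite ∧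
        (Subgroup.closure (defect fo)).FG ∧
        Subgroup.closure (defect fo) ≤ Subgroup.closure (Set.range fo) ∧
        (∀ a ∈ Subgroup.closure (defect fo), ∀ h ∈ Subgroup.closure (Set.range fo),
          a * h = h * a) ∧
        (∀ x y : Go, (fo x * fo y)⁻¹ * fo (x * y) ∈ Subgroup.closure (defect fo)) := by
  classical
  open QHproof Subgroup in
  refine ⟨GoSub f, GoSub_finiteIndex f hf, ?_⟩
  have hmem : ∀ x : GoSub f, ∃ a, a ∈ closure (defect f) ∧
      f ↑x * a ∈ centralizer (closure (defect f) : Set H) := fun x => x.2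
  choose aa haaA haaC using hmem
  haveI : Finite ↥(defect f) := hf.to_subtype
  set φ : GoSub f → (↥(defect f) → H) := fun x d => (f ↑x)⁻¹ * ↑d * f ↑x with hφ
  have hφrange : (Set.range φ).Finite := by
    have hE : (⋃ d ∈ defect f, {h : H | ∃ z : G, h = (f z)⁻¹ * d * f z}).Finite :=
      hf.biUnion fun d hd => conjSet_finite f hf (subset_closure hd)
    apply (Set.Finite.pi fun _ : ↥(defect f) => hE).subset
    rintro v ⟨x, rfl⟩
    refine Set.mem_univ_pi.mpr fun d => ?_
    exact Set.mem_biUnion d.2 ⟨↑x, rfl⟩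
  haveI : Finite ↥(Set.range φ) := hφrange.to_subtype
  set rep : ↥(Set.range φ) → GoSub f := fun v => v.2.choose with hrepd
  have hrepspec : ∀ v : ↥(Set.range φ), φ (rep v) = v.1 := fun v => v.2.choose_spec
  set r : GoSub f → GoSub f := fun x => rep ⟨φ x, ⟨x, rfl⟩⟩ with hr
  have hrphi : ∀ x, φ (r x) = φ x := fun x => hrepspec ⟨φ x, ⟨x, rfl⟩⟩
  set b : GoSub f → H := fun x => aa (r x) with hb
  set fo : GoSub f → H := fun x => f ↑x * b x with hfo
  have hbA : ∀ x, b x ∈ closure (defect f) := fun x => haaA (r x)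
  have hbFin : (Set.range b).Finite := by
    apply (Set.finite_range (fun v : ↥(Set.range φ) => aa (rep v))).subset
    rintro _ ⟨x, rfl⟩
    exact ⟨⟨φ x, ⟨x, rfl⟩⟩, rfl⟩
  have hfoC : ∀ x, fo x ∈ centralizer (closure (defect f) : Set H) := by
    intro x
    have h1 : f ↑x * (f ↑(r x))⁻¹ ∈ centralizer (closure (defect f) : Set H) := by
      have hd : ∀ d ∈ defect f,
          (f ↑x)⁻¹ * d * ((f ↑x)⁻¹)⁻¹ = (f ↑(r x))⁻¹ * d * ((f ↑(r x))⁻¹)⁻¹ := by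
        intro d hd0
        have h2 := congrFun (hrphi x) ⟨d, hd0⟩
        simp only [hφ] at h2
        rw [inv_inv, inv_inv]
        exact h2.symm
      have h3 := cent_of_conj_eq f hd
      rwa [inv_inv] at h3
    have e : fo x = (f ↑x * (f ↑(r x))⁻¹) * (f ↑(r x) * aa (r x)) := by
      simp only [hfo, hb]; group
    rw [e]
    exact mul_mem h1 (haaC (r x))
  have hdfo : ∀ x y : GoSub f,
      (fo y)⁻¹ * (fo x)⁻¹ * fo (x * y)
        = (b y)⁻¹ * ((f ↑y)⁻¹ * (b x)⁻¹ * f ↑y) * ((f ↑y)⁻¹ * (f ↑x)⁻¹ * f (↑x * ↑y))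
            * b (x * y) := by
    intro x y
    simp only [hfo, Subgroup.coe_mul]
    group
  have hDfoA : defect fo ⊆ (closure (defect f) : Set H) := by
    rintro h ⟨x, y, rfl⟩
    rw [hdfo x y]
    exact mul_mem (mul_mem (mul_mem (inv_mem (hbA y))
      (conj_mem_A f ↑y (inv_mem (hbA x)))) (subset_closure ⟨↑x, ↑y, rfl⟩)) (hbA (x * y))
  have hDfoFin : (defect fo).Finite := by
    have hConjB : (⋃ a ∈ Set.range b,
        {h : H | ∃ z : G, h = (f z)⁻¹ * a⁻¹ * f z}).Finite := by
      refine hbFin.biUnion fun a ha => ?_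
      obtain ⟨x, rfl⟩ := ha
      exact conjSet_finite f hf (inv_mem (hbA x))
    apply (((hbFin.inv.mul hConjB).mul hf).mul hbFin).subset
    rintro h ⟨x, y, rfl⟩
    rw [hdfo x y]
    refine Set.mul_mem_mul (Set.mul_mem_mul (Set.mul_mem_mul ?_ ?_) ?_) ?_
    · exact Set.inv_mem_inv.mpr ⟨y, rfl⟩
    · exact Set.mem_biUnion ⟨x, rfl⟩ ⟨↑y, rfl⟩
    · exact ⟨↑x, ↑y, rfl⟩
    · exact ⟨x * y, rfl⟩
  refine ⟨fo, hDfoFin, ?_, ?_, ?_, ?_, ?_⟩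
  · apply hbFin.subset
    rintro _ ⟨x, rfl⟩
    refine ⟨x, ?_⟩
    simp only [hfo]
    group
  · exact ⟨hDfoFin.toFinset, by rw [Set.Finite.coe_toFinset]⟩
  · rw [Subgroup.closure_le]
    rintro h ⟨x, y, rfl⟩
    exact mul_mem (mul_mem (inv_mem (subset_closure ⟨y, rfl⟩))
      (inv_mem (subset_closure ⟨x, rfl⟩))) (subset_closure ⟨x * y, rfl⟩)
  · intro a ha h hh
    have haA : a ∈ closure (defect f) := (Subgroup.closure_le _).mpr hDfoA ha
    have hhC : h ∈ centralizer (closure (defect f) : Set H) := by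
      refine (Subgroup.closure_le _).mpr ?_ hh
      rintro _ ⟨x, rfl⟩
      exact hfoC x
    exact mem_centralizer_iff.mp hhC a haA
  · intro x y
    rw [show (fo x * fo y)⁻¹ * fo (x * y) = (fo y)⁻¹ * (fo x)⁻¹ * fo (x * y) by group]
    exact subset_closure ⟨x, y, rfl⟩
end

section
/- Suppose H is a group in which the centralizer of every nontrivial element is abelian. Then for every quasihomomorphism f : G → H, either f is a homomorphism, or there exist an abelian subgroup Z ≤ H and a finite subset S ⊆ H such that f(G) ⊆ Z·S. -/
open scoped Pointwise


/-- If the centralizer of every nontrivial element of `H` is abelian, then every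
quasihomomorphism `f : G → H` is either a homomorphism, or its image is contained in
`Z·S` for some abelian subgroup `Z ≤ H` and some finite set `S ⊆ H`. -/
theorem quasihom_to_group_with_abelian_centralizers {G H : Type*} [Group G] [Group H]
    (hcen : ∀ h : H, h ≠ 1 →
      ∀ a ∈ Subgroup.centralizer {h}, ∀ b ∈ Subgroup.centralizer {h}, a * b = b * a)
    (f : G → H) (hf : (defect f).Finite) :
    (∀ x y : G, f (x * y) = f x * f y) ∨
    ∃ Z : Subgroup H, (∀ a ∈ Z, ∀ b ∈ Z, a * b = b * a) ∧
      ∃ S : Set H, S.Finite ∧ ∀ x : G, ∃ z ∈ Z, ∃ s ∈ S, f x = z * s := by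
  classical
  by_cases hhom : ∀ x y : G, f (x * y) = f x * f y
  · exact Or.inl hhom
  right
  push_neg at hhom
  obtain ⟨x₀, y₀, hxy⟩ := hhom
  set d₀ : H := (f y₀)⁻¹ * (f x₀)⁻¹ * f (x₀ * y₀) with hd₀def
  have hd₀mem : d₀ ∈ defect f := ⟨x₀, y₀, rfl⟩
  have hd₀ : d₀ ≠ 1 := by
    intro h
    apply hxy
    calc f (x₀ * y₀) = (f x₀ * f y₀) * ((f y₀)⁻¹ * (f x₀)⁻¹ * f (x₀ * y₀)) := by group
      _ = f x₀ * f y₀ := by rw [← hd₀def, h, mul_one]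
  -- the abelian subgroup
  refine ⟨Subgroup.centralizer (defect f), ?_, ?_⟩
  · intro a ha b hb
    exact hcen d₀ hd₀ a
      (Subgroup.centralizer_le (Set.singleton_subset_iff.2 hd₀mem) ha) b
      (Subgroup.centralizer_le (Set.singleton_subset_iff.2 hd₀mem) hb)
  -- key identity: conjugation by (f z)⁻¹ sends the defect set into D*D*D⁻¹
  have hF : ((defect f) * (defect f) * (defect f)⁻¹).Finite := (hf.mul hf).mul hf.inv
  have key : ∀ z : G, ∀ d ∈ defect f,
      (f z)⁻¹ * d * f z ∈ (defect f) * (defect f) * (defect f)⁻¹ := by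
    rintro z d ⟨x, y, rfl⟩
    have e : (f z)⁻¹ * ((f y)⁻¹ * (f x)⁻¹ * f (x * y)) * f z =
        ((f z)⁻¹ * (f y)⁻¹ * f (y * z)) *
        ((f (y * z))⁻¹ * (f x)⁻¹ * f (x * (y * z))) *
        ((f z)⁻¹ * (f (x * y))⁻¹ * f (x * y * z))⁻¹ := by
      rw [← mul_assoc x y z]
      group
    rw [e]
    exact Set.mul_mem_mul (Set.mul_mem_mul ⟨y, z, rfl⟩ ⟨x, y * z, rfl⟩)
      (Set.inv_mem_inv.mpr ⟨x * y, z, rfl⟩)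
  haveI : Finite ↥(defect f) := hf.to_subtype
  haveI : Nonempty G := ⟨1⟩
  set T : G → (↥(defect f) → H) := fun z d => (f z)⁻¹ * (d : H) * f z with hT
  have hrange : (Set.range T).Finite := by
    apply Set.Finite.subset
      (Set.Finite.pi (fun _ : ↥(defect f) => hF))
    rintro _ ⟨z, rfl⟩
    intro d _
    exact key z d d.2
  set sec : (↥(defect f) → H) → G := Function.invFun T with hsecdef
  refine ⟨f '' (sec '' Set.range T), (hrange.image sec).image f, ?_⟩
  intro x
  have hsec : T (sec (T x)) = T x := Function.invFun_eq ⟨x, rfl⟩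
  set z := sec (T x) with hz
  refine ⟨f x * (f z)⁻¹, ?_, f z, ⟨z, ⟨T x, ⟨x, rfl⟩, rfl⟩, rfl⟩, by group⟩
  rw [Subgroup.mem_centralizer_iff]
  intro d hd
  have h2 : (f z)⁻¹ * d * f z = (f x)⁻¹ * d * f x := congrFun hsec ⟨d, hd⟩
  calc d * (f x * (f z)⁻¹) = f x * ((f x)⁻¹ * d * f x) * (f z)⁻¹ := by group
    _ = f x * ((f z)⁻¹ * d * f z) * (f z)⁻¹ := by rw [← h2]
    _ = f x * (f z)⁻¹ * d := by group
end

section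
/- Suppose H is a group in which the centralizer of every nontrivial element is finite. Then every unbounded quasihomomorphism f : G → H (i.e., one with infinite image) is a homomorphism. -/
open Pointwise in
/-- If the centralizer of every nontrivial element of `H` is finite, then every unbounded
quasihomomorphism `f : G → H` (one with infinite image) is a homomorphism. -/
theorem unbounded_quasihom_is_hom_of_finite_centralizers {G H : Type*} [Group G] [Group H]
    (hcen : ∀ h : H, h ≠ 1 → (Subgroup.centralizer {h} : Set H).Finite)
    (f : G → H) (hf : (defect f).Finite) (hunb : (Set.range f).Infinite) :
    ∀ x y : G, f (x * y) = f x * f y := by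
  intro x y
  by_contra hne
  set d : H := (f y)⁻¹ * (f x)⁻¹ * f (x * y) with hd_def
  have hd1 : d ≠ 1 := by
    intro h
    apply hne
    have h2 : (f y)⁻¹ * (f x)⁻¹ * f (x * y) = 1 := by rw [← hd_def, h]
    have h3 : f x * (f y * ((f y)⁻¹ * (f x)⁻¹ * f (x * y))) = f x * (f y * 1) := by
      rw [h2]
    calc f (x * y) = f x * (f y * ((f y)⁻¹ * (f x)⁻¹ * f (x * y))) := by group
    _ = f x * (f y * 1) := h3
    _ = f x * f y := by group
  have key : ∀ z : G, ∃ a ∈ defect f, ∃ b ∈ defect f, ∃ c ∈ defect f,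
      (f z)⁻¹ * d * f z = a * b * c⁻¹ := by
    intro z
    refine ⟨_, ⟨y, z, rfl⟩, _, ⟨x, y * z, rfl⟩, _, ⟨x * y, z, rfl⟩, ?_⟩
    rw [hd_def, mul_assoc x y z]
    group
  set F : Set H := defect f * defect f * (defect f)⁻¹ with hF_def
  have hF : F.Finite := (hf.mul hf).mul hf.inv
  have hsub : Set.range f ⊆ ⋃ t ∈ F, {h : H | h⁻¹ * d * h = t} ∩ Set.range f := by
    rintro _ ⟨z, rfl⟩
    obtain ⟨a, ha, b, hb, c, hc, heq⟩ := key z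
    refine Set.mem_biUnion ?_ ⟨heq, ⟨z, rfl⟩⟩
    exact Set.mul_mem_mul (Set.mul_mem_mul ha hb) (Set.inv_mem_inv.mpr hc)
  have hfin : ∀ t ∈ F, ({h : H | h⁻¹ * d * h = t} ∩ Set.range f).Finite := by
    intro t _
    by_cases he : ({h : H | h⁻¹ * d * h = t} ∩ Set.range f).Nonempty
    · obtain ⟨h₀, hh₀, -⟩ := he
      refine ((hcen d hd1).image (fun c => c * h₀)).subset ?_
      rintro h ⟨hh, -⟩
      refine ⟨h * h₀⁻¹, ?_, by group⟩
      rw [SetLike.mem_coe, Subgroup.mem_centralizer_iff]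
      intro g hg
      rw [Set.mem_singleton_iff] at hg
      subst hg
      have h5 : h⁻¹ * d * h = h₀⁻¹ * d * h₀ := by
        rw [Set.mem_setOf_eq] at hh hh₀
        rw [hh, hh₀]
      calc d * (h * h₀⁻¹) = h * (h⁻¹ * d * h) * h₀⁻¹ := by group
      _ = h * (h₀⁻¹ * d * h₀) * h₀⁻¹ := by rw [h5]
      _ = h * h₀⁻¹ * d := by group
    · rw [Set.not_nonempty_iff_eq_empty] at he
      rw [he]
      exact Set.finite_empty
  exact hunb ((hF.biUnion hfin).subset hsub)
end

section
/- Every Ulam quasihomomorphism is an HS-quasimorphism: if f : G → H satisfies that D(f) = {f(y)⁻¹f(x)⁻¹f(xy) : x,y ∈ G} is finite, then for every quasimorphism φ : H → ℝ (a map with sup_{x,y} |φ(xy) − φ(x) − φ(y)| < ∞), the composition φ ∘ f : G → ℝ is a quasimorphism. -/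
/-- Every Ulam quasihomomorphism is an HS-quasimorphism: if `f : G → H` has finite defect
set, then for every quasimorphism `φ : H → ℝ` the composition `φ ∘ f` is a quasimorphism. -/
theorem ulam_quasihom_is_HS_quasimorphism {G H : Type*} [Group G] [Group H]
    (f : G → H) (hf : (defect f).Finite)
    (φ : H → ℝ) (C : ℝ) (hφ : ∀ x y : H, |φ (x * y) - φ x - φ y| ≤ C) :
    ∃ C' : ℝ, ∀ x y : G, |φ (f (x * y)) - φ (f x) - φ (f y)| ≤ C' := by
  set M := sSup ((fun d => |φ d|) '' defect f) with hM
  have hbdd : BddAbove ((fun d => |φ d|) '' defect f) := (hf.image _).bddAbove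
  refine ⟨2 * C + M, fun x y => ?_⟩
  have hd : (f y)⁻¹ * (f x)⁻¹ * f (x * y) ∈ defect f := ⟨x, y, rfl⟩
  set d := (f y)⁻¹ * (f x)⁻¹ * f (x * y) with hdd
  have hMd : |φ d| ≤ M := le_csSup hbdd ⟨d, hd, rfl⟩
  have hfe : f (x * y) = f x * f y * d := by
    rw [hdd]; group
  have h1 := hφ (f x * f y) d
  have h2 := hφ (f x) (f y)
  rw [hfe]
  calc |φ (f x * f y * d) - φ (f x) - φ (f y)|
      = |(φ (f x * f y * d) - φ (f x * f y) - φ d) + (φ (f x * f y) - φ (f x) - φ (f y)) + φ d| := by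
        ring_nf
    _ ≤ |φ (f x * f y * d) - φ (f x * f y) - φ d| + |φ (f x * f y) - φ (f x) - φ (f y)| + |φ d| := by
        exact (abs_add_le _ _).trans (add_le_add_left (abs_add_le _ _) _)
    _ ≤ C + C + M := by gcongr
    _ = 2 * C + M := by ring
end

section
/- Every middle-quasihomomorphism is an HS-quasimorphism: if f : G → H admits a finite set S ⊆ H with f(xy) ∈ f(x)·S·f(y) for all x, y ∈ G, then for every quasimorphism φ : H → ℝ the composition φ ∘ f is a quasimorphism on G. -/
/-- Every middle-quasihomomorphism is an HS-quasimorphism: if `f : G → H` admits a finite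
set `S ⊆ H` with `f(xy) ∈ f(x)·S·f(y)` for all `x, y ∈ G`, then for every quasimorphism
`φ : H → ℝ` the composition `φ ∘ f` is a quasimorphism on `G`. -/
theorem middle_quasihom_is_HS_quasimorphism {G H : Type*} [Group G] [Group H]
    (f : G → H) (S : Set H) (hS : S.Finite)
    (hmid : ∀ x y : G, ∃ s ∈ S, f (x * y) = f x * s * f y)
    (φ : H → ℝ) (C : ℝ) (hφ : ∀ x y : H, |φ (x * y) - φ x - φ y| ≤ C) :
    ∃ C' : ℝ, ∀ x y : G, |φ (f (x * y)) - φ (f x) - φ (f y)| ≤ C' := by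
  obtain ⟨s₀, hs₀, _⟩ := hmid 1 1
  have hne : hS.toFinset.Nonempty := ⟨s₀, hS.mem_toFinset.2 hs₀⟩
  set M := hS.toFinset.sup' hne (fun s => |φ s|) with hM
  refine ⟨2 * C + M, fun x y => ?_⟩
  obtain ⟨s, hs, heq⟩ := hmid x y
  have h1 := hφ (f x * s) (f y)
  have h2 := hφ (f x) s
  have h3 : |φ s| ≤ M := Finset.le_sup' (fun s => |φ s|) (hS.mem_toFinset.2 hs)
  rw [heq]
  have key : φ (f x * s * f y) - φ (f x) - φ (f y) =
      (φ (f x * s * f y) - φ (f x * s) - φ (f y)) + (φ (f x * s) - φ (f x) - φ s) + φ s := by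
    ring
  rw [key]
  calc |_ + _ + φ s| ≤ |φ (f x * s * f y) - φ (f x * s) - φ (f y)| +
        |φ (f x * s) - φ (f x) - φ s| + |φ s| :=
      (abs_add_le _ _).trans (by linarith [abs_add_le (φ (f x * s * f y) - φ (f x * s) - φ (f y)) (φ (f x * s) - φ (f x) - φ s)])
    _ ≤ C + C + M := by gcongr
    _ = 2 * C + M := by ring
end
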